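/- Let p, q be coprime integers with p, q ≥ 2 and let k ≥ 2. In the group G_{p,q,k} = ⟨x, y | x^p = y^q, x^{pk} = 1⟩, the element x^p is non-trivial and central; hence G_{p,q,k} has non-trivial center. -/

import Mathlib

/-- Relators for the group G_{p,q,k} = ⟨x, y | x^p = y^q, x^(pk) = 1⟩. -/
def gpqkRels (p q k : ℕ) : Set (FreeGroup (Fin 2)) :=
  {FreeGroup.of 0 ^ p * (FreeGroup.of 1 ^ q)⁻¹, FreeGroup.of 0 ^ (p * k)}

/-- The group G_{p,q,k} = ⟨x, y | x^p = y^q, x^(pk) = 1⟩. -/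
abbrev Gpqk (p q k : ℕ) := PresentedGroup (gpqkRels p q k)

/-!
Since `x ^ p = y ^ q`, the element `x ^ p` commutes with both generators and is therefore
central. It is non-trivial because `x ↦ q`, `y ↦ p` defines a homomorphism to `ℤ/(pqk)`,
under which `x ^ p` goes to `pq`, which is non-zero as `k ≥ 2`.
-/

theorem PresentedGroup.mem_center_of_forall_commute_of {α : Type*} {rels : Set (FreeGroup α)}
    {g : PresentedGroup rels} (h : ∀ i, Commute (of i) g) : g ∈ Subgroup.center _ :=
  Subgroup.mem_center_iff.mpr fun x =>
    PresentedGroup.generated_by rels (Subgroup.centralizer {g})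
      (fun i => Subgroup.mem_centralizer_singleton_iff.mpr (h i).eq) x |>
      Subgroup.mem_centralizer_singleton_iff.mp

theorem ZMod.natCast_ne_zero_of_mul {n k : ℕ} (hn : n ≠ 0) (hk : k ≠ 1) :
    (n : ZMod (n * k)) ≠ 0 := by
  rw [Ne, ZMod.natCast_eq_zero_iff]
  intro h
  nth_rw 2 [← mul_one n] at h
  exact hk (Nat.dvd_one.mp ((Nat.mul_dvd_mul_iff_left (Nat.pos_of_ne_zero hn)).mp h))

namespace Gpqk

variable {p q k : ℕ}

theorem of_zero_pow_eq_of_one_pow : (PresentedGroup.of 0 : Gpqk p q k) ^ p = .of 1 ^ q :=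
  PresentedGroup.mk_eq_mk_of_mul_inv_mem (Or.inl rfl)

theorem of_zero_pow_mem_center : (PresentedGroup.of 0 : Gpqk p q k) ^ p ∈ Subgroup.center _ :=
  PresentedGroup.mem_center_of_forall_commute_of <| Fin.forall_fin_two.mpr
    ⟨Commute.self_pow _ _, by rw [of_zero_pow_eq_of_one_pow]; exact Commute.self_pow _ _⟩

def lift {G : Type*} [Group G] (a b : G) (hab : a ^ p = b ^ q) (ha : a ^ (p * k) = 1) :
    Gpqk p q k →* G :=
  PresentedGroup.toGroup (f := ![a, b]) <| by
    rintro r (rfl | rfl) <;> simp [hab, ha]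

@[simp]
theorem lift_of_zero {G : Type*} [Group G] (a b : G) (hab : a ^ p = b ^ q)
    (ha : a ^ (p * k) = 1) : lift a b hab ha (.of 0) = a :=
  PresentedGroup.toGroup.of _

def toZMod (p q k : ℕ) : Gpqk p q k →* Multiplicative (ZMod (p * q * k)) :=
  lift (.ofAdd q) (.ofAdd p)
    (by simp only [← ofAdd_nsmul, nsmul_eq_mul, mul_comm])
    (by
      simp only [← ofAdd_nsmul, nsmul_eq_mul, ofAdd_eq_one]
      exact_mod_cast (ZMod.natCast_eq_zero_iff _ _).mpr ⟨1, by ring⟩)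

theorem toZMod_of_zero_pow :
    toZMod p q k (.of 0 ^ p) = .ofAdd ((p * q : ℕ) : ZMod (p * q * k)) := by
  simp only [toZMod, map_pow, lift_of_zero, ← ofAdd_nsmul, nsmul_eq_mul]
  push_cast
  rfl

theorem of_zero_pow_ne_one (hp : p ≠ 0) (hq : q ≠ 0) (hk : k ≠ 1) :
    (PresentedGroup.of 0 : Gpqk p q k) ^ p ≠ 1 := fun h => by
  have := toZMod_of_zero_pow (p := p) (q := q) (k := k)
  rw [h, map_one, eq_comm, ofAdd_eq_one] at this
  exact ZMod.natCast_ne_zero_of_mul (mul_ne_zero hp hq) hk this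

end Gpqk

theorem stmt9_general (p q k : ℕ) (hp : 2 ≤ p) (hq : 2 ≤ q)
    (hk : 2 ≤ k) :
    ((PresentedGroup.of 0 : Gpqk p q k) ^ p ∈ Subgroup.center (Gpqk p q k)) ∧
    (PresentedGroup.of 0 : Gpqk p q k) ^ p ≠ 1 ∧
    Subgroup.center (Gpqk p q k) ≠ ⊥ := by
  have hne : (PresentedGroup.of 0 : Gpqk p q k) ^ p ≠ 1 :=
    Gpqk.of_zero_pow_ne_one (by omega) (by omega) (by omega)
  refine ⟨Gpqk.of_zero_pow_mem_center, hne, ?_⟩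
  exact Subgroup.ne_bot_iff_exists_ne_one.mpr
    ⟨⟨_, Gpqk.of_zero_pow_mem_center⟩, fun h => hne (congrArg Subtype.val h)⟩

theorem stmt9 (p q k : ℕ) (hp : 2 ≤ p) (hq : 2 ≤ q) (hpq : Nat.Coprime p q)
    (hk : 2 ≤ k) :
    ((PresentedGroup.of 0 : Gpqk p q k) ^ p ∈ Subgroup.center (Gpqk p q k)) ∧
    (PresentedGroup.of 0 : Gpqk p q k) ^ p ≠ 1 ∧
    Subgroup.center (Gpqk p q k) ≠ ⊥ :=
  stmt9_general p q k hp hq hk
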